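/- arXiv:math/9810208 — 4 statements merged into one kernel-verified Lean document; each statement's English description precedes it below -/
import Mathlib

section
/- Let G be a finite group, N a subgroup of index 2 in G, and H a subgroup of N. Suppose there exists an element c of order 2 in G with c ∉ N. Then the set of elements g ∈ G such that g ∉ N and g² ∈ H has cardinality at least |H|. -/
/-!
For `a, k ∈ H` the element `a (c k) a⁻¹` lies outside `N`, because `H ≤ N` and `c ∉ N`. Its square
`a (c² · c⁻¹ k c · k) a⁻¹` lies in `H` as soon as `c⁻¹ k c ∈ H`, i.e. `k ∈ K := H ∩ cHc⁻¹`. Letting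
`a` run over representatives of `H / K` and `k` over `K`, these elements are pairwise distinct:
equality of two of them forces the quotient `a'⁻¹ a` of the representatives into `K`. This gives
`[H : K] · |K| = |H|` elements of the set.
-/

open Pointwise

section

variable {G : Type*} [Group G]

theorem Subgroup.conj_mul_mem_iff (N : Subgroup G) {a c k : G} (ha : a ∈ N) (hk : k ∈ N) :
    a * (c * k) * a⁻¹ ∈ N ↔ c ∈ N := by
  rw [N.mul_mem_cancel_right (N.inv_mem ha), N.mul_mem_cancel_left ha,
    N.mul_mem_cancel_right hk]

theorem inv_conj_eq_of_conj_mul_eq {a a' c k k' : G}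
    (h : a * (c * k) * a⁻¹ = a' * (c * k') * a'⁻¹) :
    c⁻¹ * (a'⁻¹ * a) * c = k' * (a'⁻¹ * a) * k⁻¹ := by
  have := congrArg (fun x => c⁻¹ * a'⁻¹ * x * a * k⁻¹) h
  simp only [mul_assoc, inv_mul_cancel_left, inv_mul_cancel, mul_inv_cancel, mul_one] at this
  simpa only [mul_assoc] using this

theorem mul_sq_eq (c k : G) : (c * k) ^ 2 = c ^ 2 * (c⁻¹ * k * c) * k := by
  simp only [sq, mul_assoc, mul_inv_cancel_left]

variable (H : Subgroup G) (c : G)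

def conjInter : Subgroup H :=
  (MulAut.conj c • H).subgroupOf H

variable {H c} in
theorem mem_conjInter_iff {x : H} : x ∈ conjInter H c ↔ c⁻¹ * x * c ∈ H := by
  rw [conjInter, Subgroup.mem_subgroupOf, Subgroup.mem_pointwise_smul_iff_inv_smul_mem,
    MulAut.smul_def, MulAut.conj_inv_apply]

noncomputable def twistedConj (p : (H ⧸ conjInter H c) × conjInter H c) : G :=
  (p.1.out : G) * (c * p.2) * (p.1.out : G)⁻¹

theorem twistedConj_injective : Function.Injective (twistedConj H c) := by
  rintro ⟨q, k⟩ ⟨q', k'⟩ h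
  have hq : q' = q := by
    rw [← q.out_eq', ← q'.out_eq', QuotientGroup.eq, mem_conjInter_iff]
    push_cast
    rw [inv_conj_eq_of_conj_mul_eq h]
    exact H.mul_mem (H.mul_mem k'.1.2 (H.mul_mem (H.inv_mem q'.out.2) q.out.2)) (H.inv_mem k.1.2)
  subst hq
  have hk : (k : G) = k' := mul_left_cancel (mul_left_cancel (mul_right_cancel h))
  exact Prod.ext rfl (Subtype.ext (Subtype.ext hk))

theorem twistedConj_mem_setOf {N : Subgroup G} (hHN : H ≤ N) (hc : c ^ 2 ∈ H)
    (hcN : c ∉ N) (p : (H ⧸ conjInter H c) × conjInter H c) :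
    twistedConj H c p ∈ {g : G | g ∉ N ∧ g ^ 2 ∈ H} := by
  obtain ⟨q, k⟩ := p
  have hk : c⁻¹ * k * c ∈ H := mem_conjInter_iff.1 k.2
  refine ⟨fun h => hcN ((N.conj_mul_mem_iff (hHN q.out.2) (hHN k.1.2)).1 h), ?_⟩
  rw [twistedConj, conj_pow, mul_sq_eq]
  exact H.mul_mem (H.mul_mem q.out.2 (H.mul_mem (H.mul_mem hc hk) k.1.2)) (H.inv_mem q.out.2)

theorem card_quotient_conjInter_prod :
    Nat.card ((H ⧸ conjInter H c) × conjInter H c) = Nat.card H := by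
  rw [Nat.card_prod, ← Subgroup.card_eq_card_quotient_mul_card_subgroup]

end

theorem stmt0_general (G : Type*) [Group G] [Fintype G] (N H : Subgroup G)
    (hHN : H ≤ N) (c : G) (hc2 : c ^ 2 = 1)
    (hcN : c ∉ N) :
    Nat.card H ≤ Nat.card {g : G | g ∉ N ∧ g ^ 2 ∈ H} := by
  have hc : c ^ 2 ∈ H := hc2 ▸ H.one_mem
  rw [← card_quotient_conjInter_prod H c]
  exact Nat.card_le_card_of_injective _
    ((twistedConj_injective H c).codRestrict (twistedConj_mem_setOf H c hHN hc hcN))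

theorem stmt0 (G : Type*) [Group G] [Fintype G] (N H : Subgroup G)
    (hN : N.index = 2) (hHN : H ≤ N) (c : G) (hc2 : c ^ 2 = 1) (hc1 : c ≠ 1)
    (hcN : c ∉ N) :
    Nat.card H ≤ Nat.card {g : G | g ∉ N ∧ g ^ 2 ∈ H} :=
  stmt0_general G N H hHN c hc2 hcN
end

section
/- Let G be a finite group, N a subgroup of index 2 in G, H a subgroup of N, and c an element of order 2 in G not lying in N. Then the number of elements of the double coset HcH whose square lies in H is exactly |H|. -/
/-!
Write the elements of `HcH` as `a * c * b` with `a b ∈ H`. Each element of `HcH` has exactly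
`|K|` such representations, where `K = H ∩ cHc⁻¹`. Since
`(a * c * b)² = a * (c * (b * a) * c) * b` and `c = c⁻¹`, the square lies in `H` exactly when
`b * a ∈ K`, so there are `|H| * |K|` representations of elements of `HcH` with square in `H`.
Dividing by `|K|` leaves `|H|`.
-/

open Pointwise

theorem Nat.card_preimage_eq_mul {α β : Type*} [Finite α] [Finite β] (f : α → β)
    (s : Set β) {m : ℕ} (hf : ∀ b ∈ s, Nat.card (f ⁻¹' {b}) = m) :
    Nat.card (f ⁻¹' s) = Nat.card s * m := by
  have : Fintype s := Fintype.ofFinite s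
  let e : (Σ b : s, f ⁻¹' {(b : β)}) ≃ f ⁻¹' s :=
    { toFun := fun x => ⟨x.2, by rw [Set.mem_preimage, x.2.2]; exact x.1.2⟩
      invFun := fun x => ⟨⟨f x, x.2⟩, x, rfl⟩
      left_inv := by rintro ⟨⟨b, hb⟩, x, hx⟩; cases hx; rfl
      right_inv := fun _ => rfl }
  rw [← Nat.card_congr e, Nat.card_sigma, Finset.sum_congr rfl fun b _ => hf b.1 b.2,
    Finset.sum_const, smul_eq_mul, Finset.card_univ, Nat.card_eq_fintype_card]

section DoubleCoset

variable {G : Type*} [Group G] (H : Subgroup G) (c : G)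

theorem Subgroup.mem_conj_smul_iff {x : G} :
    x ∈ MulAut.conj c • H ↔ c⁻¹ * x * c ∈ H := by
  simp [Subgroup.mem_pointwise_smul_iff_inv_smul_mem]

def doubleCosetMap (p : H × H) : G := p.1 * c * p.2

theorem card_doubleCosetMap_preimage_singleton {a b : G} (ha : a ∈ H) (hb : b ∈ H) :
    Nat.card (doubleCosetMap H c ⁻¹' {a * c * b}) = Nat.card ↥(H ⊓ MulAut.conj c • H) := by
  have hK (k : ↥(H ⊓ MulAut.conj c • H)) : a * k ∈ H ∧ c⁻¹ * k⁻¹ * c * b ∈ H := by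
    obtain ⟨hkH, hkc⟩ := Subgroup.mem_inf.1 k.2
    exact ⟨H.mul_mem ha hkH, H.mul_mem ((H.mem_conj_smul_iff c).1 (inv_mem hkc)) hb⟩
  symm
  refine Nat.card_eq_of_bijective
    (fun k => ⟨(⟨a * k, (hK k).1⟩, ⟨c⁻¹ * k⁻¹ * c * b, (hK k).2⟩),
      by simp [doubleCosetMap]; group⟩)
    ⟨fun k l hkl => by simpa using congrArg (fun p => (p.1.1 : G)) hkl, ?_⟩
  rintro ⟨⟨⟨a', ha'⟩, ⟨b', hb'⟩⟩, h⟩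
  obtain rfl : a' = a * c * b * b'⁻¹ * c⁻¹ := by
    simp only [Set.mem_preimage, Set.mem_singleton_iff, doubleCosetMap] at h
    rw [← h]; group
  refine ⟨⟨a⁻¹ * (a * c * b * b'⁻¹ * c⁻¹),
    Subgroup.mem_inf.2 ⟨H.mul_mem (inv_mem ha) ha', ?_⟩⟩, ?_⟩
  · rw [Subgroup.mem_conj_smul_iff]
    convert H.mul_mem hb (inv_mem hb') using 1
    group
  · ext <;> simp [mul_assoc]

theorem doubleCosetMap_sq_mem_iff (p : H × H) :
    doubleCosetMap H c p ^ 2 ∈ H ↔ c * (p.2 * p.1) * c ∈ H := by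
  have hsq : doubleCosetMap H c p ^ 2 = p.1 * (c * (p.2 * p.1) * c) * p.2 := by
    simp only [doubleCosetMap, sq, mul_assoc]
  rw [hsq, H.mul_mem_cancel_right p.2.2, H.mul_mem_cancel_left p.1.2]

theorem card_doubleCosetMap_preimage_sq_mem (hc : c ^ 2 = 1) :
    Nat.card (doubleCosetMap H c ⁻¹' {g | g ^ 2 ∈ H}) =
      Nat.card H * Nat.card ↥(H ⊓ MulAut.conj c • H) := by
  have hc' : c⁻¹ = c := inv_eq_of_mul_eq_one_right (by rw [← sq, hc])
  have hK (p : H × H) :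
      doubleCosetMap H c p ^ 2 ∈ H ↔ (p.2 : G) * p.1 ∈ H ⊓ MulAut.conj c • H := by
    rw [doubleCosetMap_sq_mem_iff, Subgroup.mem_inf, Subgroup.mem_conj_smul_iff, hc',
      and_iff_right (H.mul_mem p.2.2 p.1.2)]
  rw [← Nat.card_prod]
  refine Nat.card_congr
    { toFun := fun p => (p.1.1, ⟨p.1.2 * p.1.1, (hK p.1).1 p.2⟩)
      invFun := fun q =>
        ⟨(q.1, ⟨q.2 * q.1⁻¹, H.mul_mem (Subgroup.mem_inf.1 q.2.2).1 (inv_mem q.1.2)⟩),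
          (hK _).2 (by simp)⟩
      left_inv := fun p => by ext <;> simp
      right_inv := fun q => by ext <;> simp }

end DoubleCoset

theorem stmt1_general (G : Type*) [Group G] [Fintype G] (H : Subgroup G) (c : G)
    (hc2 : c ^ 2 = 1) :
    Nat.card {g : G | (∃ h₁ ∈ H, ∃ h₂ ∈ H, g = h₁ * c * h₂) ∧ g ^ 2 ∈ H}
      = Nat.card H := by
  set S := {g : G | (∃ h₁ ∈ H, ∃ h₂ ∈ H, g = h₁ * c * h₂) ∧ g ^ 2 ∈ H}
  have hpre : doubleCosetMap H c ⁻¹' S = doubleCosetMap H c ⁻¹' {g | g ^ 2 ∈ H} := by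
    ext p
    simpa [S] using fun _ : doubleCosetMap H c p ^ 2 ∈ H => ⟨p.1, p.1.2, p.2, p.2.2, rfl⟩
  have hcount := Nat.card_preimage_eq_mul (doubleCosetMap H c) S
    fun _ ⟨⟨_, ha, _, hb, hg⟩, _⟩ => hg ▸ card_doubleCosetMap_preimage_singleton H c ha hb
  rw [hpre, card_doubleCosetMap_preimage_sq_mem H c hc2] at hcount
  exact (Nat.eq_of_mul_eq_mul_right Nat.card_pos hcount).symm

theorem stmt1 (G : Type*) [Group G] [Fintype G] (N H : Subgroup G)
    (hN : N.index = 2) (hHN : H ≤ N) (c : G) (hc2 : c ^ 2 = 1)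
    (hcN : c ∉ N) :
    Nat.card {g : G | (∃ h₁ ∈ H, ∃ h₂ ∈ H, g = h₁ * c * h₂) ∧ g ^ 2 ∈ H}
      = Nat.card H :=
  stmt1_general G H c hc2
end

section
/- The number of matrices in GL₂(F_q) that are diagonalizable over F_q equals (q−2)(q−1)q(q+1)/2 + (q−1). -/
open Matrix
set_option linter.unusedSectionVars false
set_option maxHeartbeats 1000000
namespace Stmt5Aux
variable {F : Type*} [Field F] [Fintype F] [DecidableEq F]

def vec (s : Option F) : Fin 2 → F :=
  match s with
  | some m => ![1, m]
  | none => ![0, 1]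

lemma vec_smul_cancel {s : Option F} {c c' : F} (h : c • vec s = c' • vec s) : c = c' := by
  cases s with
  | none => simpa [vec] using congrFun h 1
  | some m => simpa [vec] using congrFun h 0

lemma vec_ne_zero (s : Option F) : vec s ≠ 0 := by
  intro h
  cases s with
  | none => simpa [vec] using congrFun h 1
  | some m => simpa [vec] using congrFun h 0

def slope (w : Fin 2 → F) : Option F :=
  if w 0 = 0 then none else some (w 1 / w 0)

lemma exists_smul_vec_slope (w : Fin 2 → F) (hw : w ≠ 0) :
    ∃ c : F, c ≠ 0 ∧ w = c • vec (slope w) := by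
  by_cases h0 : w 0 = 0
  · refine ⟨w 1, ?_, ?_⟩
    · intro h1; apply hw; ext i; fin_cases i <;> simp [h0, h1]
    · ext i; fin_cases i <;> simp [slope, h0, vec]
  · refine ⟨w 0, h0, ?_⟩
    ext i; fin_cases i <;> simp [slope, h0, vec]
    field_simp

def Pm (s t : Option F) : Matrix (Fin 2) (Fin 2) F :=
  Matrix.of fun i j => vec (if j = 0 then s else t) i

lemma Pm_col0 (s t : Option F) (i : Fin 2) : Pm s t i 0 = vec s i := rfl
lemma Pm_col1 (s t : Option F) (i : Fin 2) : Pm s t i 1 = vec t i := rfl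

lemma det_Pm {s t : Option F} (h : s ≠ t) : (Pm s t).det ≠ 0 := by
  rw [Matrix.det_fin_two]
  cases s with
  | none =>
    cases t with
    | none => exact absurd rfl h
    | some m => simp [Pm, vec]
  | some m =>
    cases t with
    | none => simp [Pm, vec]
    | some m' =>
      simp only [Pm, vec, Matrix.of_apply]
      simp only [if_pos rfl, if_neg (by decide : (1 : Fin 2) ≠ 0)]
      simp [Matrix.cons_val_zero, Matrix.cons_val_one, sub_eq_zero]
      intro hc
      exact h (by rw [hc])


noncomputable def gP {s t : Option F} (h : s ≠ t) : GL (Fin 2) F :=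
  Matrix.GeneralLinearGroup.mkOfDetNeZero (Pm s t) (det_Pm h)

lemma gP_val {s t : Option F} (h : s ≠ t) : (gP h : Matrix (Fin 2) (Fin 2) F) = Pm s t := rfl

noncomputable def gD (a b : Fˣ) : GL (Fin 2) F :=
  Matrix.GeneralLinearGroup.mkOfDetNeZero (Matrix.diagonal ![a.val, b.val])
    (by
      rw [Matrix.det_diagonal]
      simp [Fin.prod_univ_two, a.ne_zero, b.ne_zero])

lemma gD_val (a b : Fˣ) : (gD a b : Matrix (Fin 2) (Fin 2) F) = Matrix.diagonal ![a.val, b.val] := rfl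

noncomputable def fE (a b : Fˣ) {s t : Option F} (h : s ≠ t) : GL (Fin 2) F :=
  gP h * gD a b * (gP h)⁻¹

-- column extraction
lemma mul_Pm_col0 (N : Matrix (Fin 2) (Fin 2) F) (s t : Option F) (i : Fin 2) :
    (N * Pm s t) i 0 = (N *ᵥ vec s) i := by
  simp [Matrix.mul_apply, Matrix.mulVec, dotProduct, Pm]

lemma mul_Pm_col1 (N : Matrix (Fin 2) (Fin 2) F) (s t : Option F) (i : Fin 2) :
    (N * Pm s t) i 1 = (N *ᵥ vec t) i := by
  simp [Matrix.mul_apply, Matrix.mulVec, dotProduct, Pm]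

lemma Pm_mul_diag_col0 (s t : Option F) (d : Fin 2 → F) (i : Fin 2) :
    (Pm s t * Matrix.diagonal d) i 0 = d 0 * vec s i := by
  simp [Matrix.mul_apply, Matrix.diagonal, Pm, Finset.sum_ite_eq, mul_comm]

lemma Pm_mul_diag_col1 (s t : Option F) (d : Fin 2 → F) (i : Fin 2) :
    (Pm s t * Matrix.diagonal d) i 1 = d 1 * vec t i := by
  simp [Matrix.mul_apply, Matrix.diagonal, Pm, Finset.sum_ite_eq, mul_comm]

/-- The key uniqueness lemma: any GL element with the two given eigenvectors equals `fE`. -/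
lemma eq_fE {a b : Fˣ} {s t : Option F} (h : s ≠ t) (N : GL (Fin 2) F)
    (hs : (N : Matrix (Fin 2) (Fin 2) F) *ᵥ vec s = a.val • vec s)
    (ht : (N : Matrix (Fin 2) (Fin 2) F) *ᵥ vec t = b.val • vec t) :
    N = fE a b h := by
  have key : N * gP h = gP h * gD a b := by
    apply Units.ext
    show (N : Matrix (Fin 2) (Fin 2) F) * Pm s t = Pm s t * Matrix.diagonal ![a.val, b.val]
    ext i j
    fin_cases j <;> simp only [Fin.zero_eta, Fin.mk_one]
    · rw [mul_Pm_col0, Pm_mul_diag_col0, hs]; simp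
    · rw [mul_Pm_col1, Pm_mul_diag_col1, ht]; simp
  calc N = N * gP h * (gP h)⁻¹ := by group
  _ = gP h * gD a b * (gP h)⁻¹ := by rw [key]
  _ = fE a b h := rfl

lemma fE_eig_s (a b : Fˣ) {s t : Option F} (h : s ≠ t) :
    (fE a b h : Matrix (Fin 2) (Fin 2) F) *ᵥ vec s = a.val • vec s := by
  have key : (fE a b h : Matrix (Fin 2) (Fin 2) F) * Pm s t = Pm s t * Matrix.diagonal ![a.val, b.val] := by
    show ((gP h * gD a b * (gP h)⁻¹) : GL (Fin 2) F).val * Pm s t = _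
    have : (gP h * gD a b * (gP h)⁻¹ : GL (Fin 2) F) * gP h = gP h * gD a b := by group
    calc ((gP h * gD a b * (gP h)⁻¹) : GL (Fin 2) F).val * Pm s t
        = ((gP h * gD a b * (gP h)⁻¹ : GL (Fin 2) F) * gP h).val := by rw [Units.val_mul]; rfl
      _ = (gP h * gD a b : GL (Fin 2) F).val := by rw [this]
      _ = Pm s t * Matrix.diagonal ![a.val, b.val] := by rw [Units.val_mul]; rfl
  ext i
  have := congrFun (congrFun key i) 0
  rw [mul_Pm_col0, Pm_mul_diag_col0] at this
  simpa using this

lemma fE_eig_t (a b : Fˣ) {s t : Option F} (h : s ≠ t) :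
    (fE a b h : Matrix (Fin 2) (Fin 2) F) *ᵥ vec t = b.val • vec t := by
  have key : (fE a b h : Matrix (Fin 2) (Fin 2) F) * Pm s t = Pm s t * Matrix.diagonal ![a.val, b.val] := by
    show ((gP h * gD a b * (gP h)⁻¹) : GL (Fin 2) F).val * Pm s t = _
    have : (gP h * gD a b * (gP h)⁻¹ : GL (Fin 2) F) * gP h = gP h * gD a b := by group
    calc ((gP h * gD a b * (gP h)⁻¹) : GL (Fin 2) F).val * Pm s t
        = ((gP h * gD a b * (gP h)⁻¹ : GL (Fin 2) F) * gP h).val := by rw [Units.val_mul]; rfl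
      _ = (gP h * gD a b : GL (Fin 2) F).val := by rw [this]
      _ = Pm s t * Matrix.diagonal ![a.val, b.val] := by rw [Units.val_mul]; rfl
  ext i
  have := congrFun (congrFun key i) 1
  rw [mul_Pm_col1, Pm_mul_diag_col1] at this
  simpa using this

lemma fE_swap (a b : Fˣ) {s t : Option F} (h : s ≠ t) :
    fE b a (Ne.symm h) = fE a b h :=
  eq_fE h _ (fE_eig_t b a (Ne.symm h)) (fE_eig_s b a (Ne.symm h))


lemma smul_one_diag (c : F) : c • (1 : Matrix (Fin 2) (Fin 2) F) = Matrix.diagonal (fun _ => c) := by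
  ext i j
  by_cases h : i = j <;> simp [Matrix.diagonal, Matrix.one_apply, h]

/-- annihilation: (X - a)(X - b) = 0 for X = fE a b. -/
lemma fE_ann (a b : Fˣ) {s t : Option F} (h : s ≠ t) :
    ((fE a b h : Matrix (Fin 2) (Fin 2) F) - a.val • 1) *
      ((fE a b h : Matrix (Fin 2) (Fin 2) F) - b.val • 1) = 0 := by
  set P : GL (Fin 2) F := gP h
  set D : Matrix (Fin 2) (Fin 2) F := Matrix.diagonal ![a.val, b.val] with hD
  have hval : (fE a b h : Matrix (Fin 2) (Fin 2) F) = P.val * D * (P⁻¹).val := rfl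
  have hPinv : P.val * (P⁻¹).val = 1 := by
    rw [← Units.val_mul, mul_inv_cancel, Units.val_one]
  have hPinv' : (P⁻¹).val * P.val = 1 := by
    rw [← Units.val_mul, inv_mul_cancel, Units.val_one]
  have conj : ∀ c : F, c • (1 : Matrix (Fin 2) (Fin 2) F) = P.val * (c • 1) * (P⁻¹).val := by
    intro c
    rw [Matrix.mul_smul, mul_one, Matrix.smul_mul, hPinv]
  have hfac : ∀ c : F, (fE a b h : Matrix (Fin 2) (Fin 2) F) - c • 1
      = P.val * (D - c • 1) * (P⁻¹).val := by
    intro c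
    rw [Matrix.mul_sub, Matrix.sub_mul, hval, ← conj]
  have hDD : (D - a.val • 1) * (D - b.val • 1) = 0 := by
    rw [hD, Matrix.smul_one_eq_diagonal, Matrix.smul_one_eq_diagonal,
      Matrix.diagonal_sub, Matrix.diagonal_sub, Matrix.diagonal_mul_diagonal]
    ext i j
    fin_cases i <;> fin_cases j <;> simp [Matrix.diagonal]
  rw [hfac, hfac]
  calc P.val * (D - a.val • 1) * (P⁻¹).val * (P.val * (D - b.val • 1) * (P⁻¹).val)
      = P.val * (D - a.val • 1) * ((P⁻¹).val * P.val) * ((D - b.val • 1) * (P⁻¹).val) := by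
        simp only [Matrix.mul_assoc]
    _ = P.val * ((D - a.val • 1) * (D - b.val • 1)) * (P⁻¹).val := by
        rw [hPinv', mul_one]; simp only [Matrix.mul_assoc]
    _ = 0 := by rw [hDD, Matrix.mul_zero, Matrix.zero_mul]

/-- eigenvalue extraction -/
lemma fE_eigval {a b : Fˣ} {s t : Option F} (h : s ≠ t) {v : Fin 2 → F} {c : F}
    (hv : v ≠ 0) (hc : (fE a b h : Matrix (Fin 2) (Fin 2) F) *ᵥ v = c • v) :
    c = a.val ∨ c = b.val := by
  set X : Matrix (Fin 2) (Fin 2) F := (fE a b h : Matrix (Fin 2) (Fin 2) F)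
  have h1 : (X - b.val • 1) *ᵥ v = (c - b.val) • v := by
    rw [Matrix.sub_mulVec, hc, Matrix.smul_mulVec, Matrix.one_mulVec, sub_smul]
  have h2 : (X - a.val • 1) *ᵥ ((c - b.val) • v) = ((c - a.val) * (c - b.val)) • v := by
    rw [Matrix.mulVec_smul, Matrix.sub_mulVec, hc, Matrix.smul_mulVec,
      Matrix.one_mulVec, sub_smul]
    module
  have h0 : ((c - a.val) * (c - b.val)) • v = 0 := by
    rw [← h2, ← h1, Matrix.mulVec_mulVec, fE_ann, Matrix.zero_mulVec]
  rcases smul_eq_zero.mp h0 with h' | h'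
  · rcases mul_eq_zero.mp h' with h'' | h''
    · exact Or.inl (sub_eq_zero.mp h'')
    · exact Or.inr (sub_eq_zero.mp h'')
  · exact absurd h' hv


lemma smul_one_mulVec (c : F) (v : Fin 2 → F) :
    (c • (1 : Matrix (Fin 2) (Fin 2) F)) *ᵥ v = c • v := by
  rw [Matrix.smul_mulVec, Matrix.one_mulVec]

lemma fE_eigline {a b : Fˣ} {s t s' : Option F} (h : s ≠ t) (hab : a ≠ b)
    (h' : (fE a b h : Matrix (Fin 2) (Fin 2) F) *ᵥ vec s' = a.val • vec s') : s' = s := by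
  by_contra hs
  set X : Matrix (Fin 2) (Fin 2) F := (fE a b h : Matrix (Fin 2) (Fin 2) F) with hX
  have hss' : s ≠ s' := fun e => hs e.symm
  have hdet := det_Pm (F := F) hss'
  have key : X * Pm s s' = (a.val • 1) * Pm s s' := by
    ext i j
    fin_cases j <;> simp only [Fin.zero_eta, Fin.mk_one]
    · rw [mul_Pm_col0, mul_Pm_col0, fE_eig_s a b h, smul_one_mulVec]
    · rw [mul_Pm_col1, mul_Pm_col1, h', smul_one_mulVec]
  have hX1 : X = a.val • 1 := by
    calc X = X * (Pm s s' * (Pm s s')⁻¹) := by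
            rw [Matrix.mul_nonsing_inv _ (isUnit_iff_ne_zero.mpr hdet), Matrix.mul_one]
      _ = (a.val • 1) * (Pm s s' * (Pm s s')⁻¹) := by
            rw [← Matrix.mul_assoc, key, Matrix.mul_assoc]
      _ = a.val • 1 := by
            rw [Matrix.mul_nonsing_inv _ (isUnit_iff_ne_zero.mpr hdet), Matrix.mul_one]
  have ht := fE_eig_t a b h
  rw [← hX, hX1, smul_one_mulVec] at ht
  exact hab (Units.ext (vec_smul_cancel ht))

lemma fE_not_scalar {a b : Fˣ} {s t : Option F} (h : s ≠ t) (hab : a ≠ b) (c : F) :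
    (fE a b h : Matrix (Fin 2) (Fin 2) F) ≠ c • 1 := by
  intro hc
  have h1 := fE_eig_s a b h
  have h2 := fE_eig_t a b h
  rw [hc, smul_one_mulVec] at h1 h2
  exact hab (Units.ext ((vec_smul_cancel h1).symm.trans (vec_smul_cancel h2)))


def Sset : Set (GL (Fin 2) F) :=
  {M | ∃ (P : GL (Fin 2) F) (d : Fin 2 → F),
    ((P * M * P⁻¹ : GL (Fin 2) F) : Matrix (Fin 2) (Fin 2) F) = Matrix.diagonal d}

def ScSet : Set (GL (Fin 2) F) :=
  {M | ∃ c : F, (M : Matrix (Fin 2) (Fin 2) F) = c • 1}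

lemma scalar_mem_S {M : GL (Fin 2) F} (hM : M ∈ ScSet) : M ∈ Sset := by
  obtain ⟨c, hc⟩ := hM
  exact ⟨1, fun _ => c, by simp [hc, Matrix.smul_one_eq_diagonal]⟩

lemma fE_mem_S (a b : Fˣ) {s t : Option F} (h : s ≠ t) : fE a b h ∈ Sset := by
  refine ⟨(gP h)⁻¹, ![a.val, b.val], ?_⟩
  have : (gP h)⁻¹ * fE a b h * ((gP h)⁻¹)⁻¹ = gD a b := by
    rw [fE]; group
  rw [this, gD_val]

lemma col_mulVec (A B : Matrix (Fin 2) (Fin 2) F) (j i : Fin 2) :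
    (A * B) i j = (A *ᵥ (fun k => B k j)) i := by
  simp [Matrix.mul_apply, Matrix.mulVec, dotProduct]

lemma unit_det_ne_zero (u : GL (Fin 2) F) : (u : Matrix (Fin 2) (Fin 2) F).det ≠ 0 :=
  (Matrix.isUnit_iff_isUnit_det _ |>.mp u.isUnit).ne_zero

lemma mem_S_cases {M : GL (Fin 2) F} (hM : M ∈ Sset) :
    M ∈ ScSet ∨ ∃ (a b : Fˣ) (s t : Option F) (hst : s ≠ t), a ≠ b ∧ fE a b hst = M := by
  obtain ⟨P, d, hPd⟩ := hM
  by_cases hd : d 0 = d 1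
  · left
    refine ⟨d 0, ?_⟩
    have hdfun : d = fun _ : Fin 2 => d 0 := funext (Fin.forall_fin_two.mpr ⟨rfl, hd.symm⟩)
    have hdiag : Matrix.diagonal d = d 0 • (1 : Matrix (Fin 2) (Fin 2) F) := by
      rw [Matrix.smul_one_eq_diagonal, hdfun]
    have hM' : M = P⁻¹ * (P * M * P⁻¹) * P := by group
    calc (M : Matrix (Fin 2) (Fin 2) F)
        = (P⁻¹ * (P * M * P⁻¹) * P : GL (Fin 2) F) := by rw [← hM']
      _ = (P⁻¹).val * ((P * M * P⁻¹ : GL (Fin 2) F) : Matrix (Fin 2) (Fin 2) F) * P.val := by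
          rw [Units.val_mul, Units.val_mul]
      _ = (P⁻¹).val * (d 0 • 1) * P.val := by rw [hPd, hdiag]
      _ = d 0 • ((P⁻¹).val * P.val) := by
          rw [Matrix.mul_smul, mul_one, Matrix.smul_mul]
      _ = d 0 • 1 := by rw [← Units.val_mul, inv_mul_cancel, Units.val_one]
  · right
    set Q : GL (Fin 2) F := P⁻¹ with hQ
    set w : Fin 2 → Fin 2 → F := fun j i => (Q : Matrix (Fin 2) (Fin 2) F) i j with hw
    have hMQ : (M : Matrix (Fin 2) (Fin 2) F) * Q = (Q : Matrix (Fin 2) (Fin 2) F) * Matrix.diagonal d := by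
      have : M * Q = Q * (P * M * P⁻¹) := by rw [hQ]; group
      calc (M : Matrix (Fin 2) (Fin 2) F) * Q = ((M * Q : GL (Fin 2) F) : Matrix (Fin 2) (Fin 2) F) := rfl
        _ = ((Q * (P * M * P⁻¹) : GL (Fin 2) F) : Matrix (Fin 2) (Fin 2) F) := by rw [this]
        _ = (Q : Matrix (Fin 2) (Fin 2) F) * Matrix.diagonal d := by
            rw [Units.val_mul, hPd]
    have heig : ∀ j, (M : Matrix (Fin 2) (Fin 2) F) *ᵥ w j = d j • w j := by
      intro j
      ext i
      have := congrFun (congrFun hMQ i) j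
      rw [col_mulVec] at this
      rw [show (fun k => (Q : Matrix (Fin 2) (Fin 2) F) k j) = w j from rfl] at this
      rw [this]
      simp [Matrix.mul_apply, Matrix.diagonal, Finset.sum_ite_eq, hw, mul_comm]
    have hwne : ∀ j, w j ≠ 0 := by
      intro j hj
      apply unit_det_ne_zero Q
      apply Matrix.det_eq_zero_of_column_eq_zero j
      intro i
      exact congrFun hj i
    have hdne : ∀ j, d j ≠ 0 := by
      have hdet : (Matrix.diagonal d).det ≠ 0 := by
        rw [← hPd]; exact unit_det_ne_zero _
      rw [Matrix.det_diagonal, Fin.prod_univ_two] at hdet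
      refine Fin.forall_fin_two.mpr ⟨?_, ?_⟩ <;> intro hj <;> rw [hj] at hdet <;> simp at hdet
    obtain ⟨c0, hc0, hw0⟩ := exists_smul_vec_slope (w 0) (hwne 0)
    obtain ⟨c1, hc1, hw1⟩ := exists_smul_vec_slope (w 1) (hwne 1)
    have hst : slope (w 0) ≠ slope (w 1) := by
      intro he
      apply unit_det_ne_zero Q
      rw [Matrix.det_fin_two]
      have e : ∀ i, w 0 i = c0 * vec (slope (w 0)) i := by
        intro i; have := congrFun hw0 i; simpa using this
      have e' : ∀ i, w 1 i = c1 * vec (slope (w 0)) i := by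
        intro i; have := congrFun hw1 i; rw [← he] at this; simpa using this
      rw [show (Q : Matrix (Fin 2) (Fin 2) F) 0 0 = w 0 0 from rfl,
        show (Q : Matrix (Fin 2) (Fin 2) F) 1 0 = w 0 1 from rfl,
        show (Q : Matrix (Fin 2) (Fin 2) F) 0 1 = w 1 0 from rfl,
        show (Q : Matrix (Fin 2) (Fin 2) F) 1 1 = w 1 1 from rfl,
        e 0, e 1, e' 0, e' 1]
      ring
    have heigs : (M : Matrix (Fin 2) (Fin 2) F) *ᵥ vec (slope (w 0)) = d 0 • vec (slope (w 0)) := by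
      have h' := heig 0
      rw [hw0, Matrix.mulVec_smul, smul_comm (d 0) c0] at h'
      exact smul_right_injective (Fin 2 → F) hc0 h'
    have heigt : (M : Matrix (Fin 2) (Fin 2) F) *ᵥ vec (slope (w 1)) = d 1 • vec (slope (w 1)) := by
      have h' := heig 1
      rw [hw1, Matrix.mulVec_smul, smul_comm (d 1) c1] at h'
      exact smul_right_injective (Fin 2 → F) hc1 h'
    refine ⟨Units.mk0 (d 0) (hdne 0), Units.mk0 (d 1) (hdne 1), slope (w 0), slope (w 1), hst,
      ?_, (eq_fE hst M heigs heigt).symm⟩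
    intro he
    exact hd (by rw [← Units.val_mk0 (hdne 0), he, Units.val_mk0])


lemma fE_inj {a b a' b' : Fˣ} {s t s' t' : Option F} (h : s ≠ t) (h' : s' ≠ t')
    (hab : a ≠ b) (hab' : a' ≠ b') (he : fE a' b' h' = fE a b h) :
    (a' = a ∧ b' = b ∧ s' = s ∧ t' = t) ∨ (a' = b ∧ b' = a ∧ s' = t ∧ t' = s) := by
  have hs' : (fE a b h : Matrix (Fin 2) (Fin 2) F) *ᵥ vec s' = a'.val • vec s' := by
    rw [← he]; exact fE_eig_s a' b' h'
  have ht' : (fE a b h : Matrix (Fin 2) (Fin 2) F) *ᵥ vec t' = b'.val • vec t' := by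
    rw [← he]; exact fE_eig_t a' b' h'
  have hswap : fE b a (Ne.symm h) = fE a b h := fE_swap a b h
  rcases fE_eigval h (vec_ne_zero s') hs' with ha' | ha'
  · left
    have haa : a' = a := Units.ext ha'
    rw [ha'] at hs'
    have hss : s' = s := fE_eigline h hab hs'
    have hbb : b' = b := by
      rcases fE_eigval h (vec_ne_zero t') ht' with hb | hb
      · exact absurd (haa.trans (Units.ext hb).symm) hab'
      · exact Units.ext hb
    rw [hbb] at ht'
    rw [← hswap] at ht'
    have htt : t' = t := fE_eigline (Ne.symm h) (Ne.symm hab) ht'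
    exact ⟨haa, hbb, hss, htt⟩
  · right
    have haa : a' = b := Units.ext ha'
    rw [ha', ← hswap] at hs'
    have hss : s' = t := fE_eigline (Ne.symm h) (Ne.symm hab) hs'
    have hbb : b' = a := by
      rcases fE_eigval h (vec_ne_zero t') ht' with hb | hb
      · exact Units.ext hb
      · exact absurd (haa.trans (Units.ext hb).symm) hab'
    rw [hbb] at ht'
    have htt : t' = s := fE_eigline h hab ht'
    exact ⟨haa, hbb, hss, htt⟩

variable (F) in
abbrev Etype : Type _ :=
  {p : (Fˣ × Fˣ) × (Option F × Option F) // p.1.1 ≠ p.1.2 ∧ p.2.1 ≠ p.2.2}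

noncomputable def fmap (e : Etype F) : GL (Fin 2) F :=
  fE e.val.1.1 e.val.1.2 e.prop.2

def eswap (e : Etype F) : Etype F :=
  ⟨((e.val.1.2, e.val.1.1), (e.val.2.2, e.val.2.1)), Ne.symm e.prop.1, Ne.symm e.prop.2⟩

lemma fmap_eswap (e : Etype F) : fmap (eswap e) = fmap e :=
  fE_swap _ _ _

lemma eswap_ne (e : Etype F) : eswap e ≠ e := by
  intro hc
  have : (eswap e).val.1.1 = e.val.1.1 := congrArg (fun x => x.val.1.1) hc
  exact e.prop.1 this.symm

lemma fmap_mem (e : Etype F) : fmap e ∈ Sset ∧ fmap e ∉ ScSet := by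
  refine ⟨fE_mem_S _ _ _, ?_⟩
  rintro ⟨c, hc⟩
  exact fE_not_scalar e.prop.2 e.prop.1 c hc

lemma fmap_fiber {e e' : Etype F} (he : fmap e' = fmap e) : e' = e ∨ e' = eswap e := by
  obtain ⟨⟨⟨ea, eb⟩, es, et⟩, hp1, hp2⟩ := e
  obtain ⟨⟨⟨ea', eb'⟩, es', et'⟩, hp1', hp2'⟩ := e'
  rcases fE_inj hp2 hp2' hp1 hp1' he with ⟨h1, h2, h3, h4⟩ | ⟨h1, h2, h3, h4⟩
  · left; subst h1; subst h2; subst h3; subst h4; rfl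
  · right; subst h1; subst h2; subst h3; subst h4; rfl

lemma surj_fmap {M : GL (Fin 2) F} (h1 : M ∈ Sset) (h2 : M ∉ ScSet) :
    ∃ e : Etype F, fmap e = M := by
  rcases mem_S_cases h1 with h | ⟨a, b, s, t, hst, hab, hfe⟩
  · exact absurd h h2
  · exact ⟨⟨((a, b), (s, t)), hab, hst⟩, hfe⟩


noncomputable def scal (c : Fˣ) : GL (Fin 2) F :=
  Matrix.GeneralLinearGroup.mkOfDetNeZero (c.val • 1)
    (by
      rw [Matrix.det_smul, Matrix.det_one]
      simp [c.ne_zero])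

lemma scal_bij : Function.Bijective
    (fun c : Fˣ => (⟨scal c, ⟨c.val, rfl⟩⟩ : ScSet (F := F))) := by
  constructor
  · intro c c' hcc
    apply Units.ext
    have h : (scal c : Matrix (Fin 2) (Fin 2) F) = (scal c' : Matrix (Fin 2) (Fin 2) F) := by
      have := congrArg (fun x => ((x : ScSet (F := F)) : GL (Fin 2) F)) hcc
      exact congrArg Units.val this
    have h00 := congrFun (congrFun h 0) 0
    simp only [scal] at h00
    have e1 : (c.val • (1 : Matrix (Fin 2) (Fin 2) F)) 0 0 = c.val := by
      simp [Matrix.one_apply]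
    have e2 : (c'.val • (1 : Matrix (Fin 2) (Fin 2) F)) 0 0 = c'.val := by
      simp [Matrix.one_apply]
    rw [← e1, ← e2]
    exact h00
  · rintro ⟨M, c, hc⟩
    have hcne : c ≠ 0 := by
      intro h0
      apply unit_det_ne_zero M
      rw [hc, h0, zero_smul, Matrix.det_zero]
    refine ⟨Units.mk0 c hcne, ?_⟩
    apply Subtype.ext
    apply Units.ext
    show c • (1 : Matrix (Fin 2) (Fin 2) F) = (M : Matrix (Fin 2) (Fin 2) F)
    exact hc.symm

lemma card_ne_pair (α : Type*) [Fintype α] [DecidableEq α] :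
    Fintype.card {p : α × α // p.1 ≠ p.2} = Fintype.card α * Fintype.card α - Fintype.card α := by
  rw [Fintype.card_subtype]
  have h : (Finset.univ.filter fun p : α × α => p.1 ≠ p.2) = (Finset.univ : Finset α).offDiag := by
    ext p
    simp [Finset.mem_offDiag]
  rw [h, Finset.offDiag_card, Finset.card_univ]

def eEquiv : Etype F ≃ {p : Fˣ × Fˣ // p.1 ≠ p.2} × {p : Option F × Option F // p.1 ≠ p.2} where
  toFun e := (⟨e.val.1, e.prop.1⟩, ⟨e.val.2, e.prop.2⟩)
  invFun x := ⟨(x.1.val, x.2.val), x.1.prop, x.2.prop⟩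
  left_inv e := rfl
  right_inv x := rfl

lemma card_Etype : Fintype.card (Etype F) =
    ((Fintype.card F - 1) * (Fintype.card F - 1) - (Fintype.card F - 1)) *
      ((Fintype.card F + 1) * (Fintype.card F + 1) - (Fintype.card F + 1)) := by
  rw [Fintype.card_congr (eEquiv (F := F)), Fintype.card_prod, card_ne_pair, card_ne_pair,
    Fintype.card_units, Fintype.card_option]

end Stmt5Aux

open Stmt5Aux in
theorem stmt5 (F : Type*) [Field F] [Fintype F] [DecidableEq F] (q : ℕ)
    (hq : q = Fintype.card F) :
    Nat.card {M : GL (Fin 2) F | ∃ (P : GL (Fin 2) F) (d : Fin 2 → F),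
        ((P * M * P⁻¹ : GL (Fin 2) F) : Matrix (Fin 2) (Fin 2) F) = Matrix.diagonal d}
      = (q - 2) * (q - 1) * q * (q + 1) / 2 + (q - 1) := by
  classical
  have hq2 : 2 ≤ q := by
    rw [hq]
    exact Fintype.one_lt_card
  have hSeq : {M : GL (Fin 2) F | ∃ (P : GL (Fin 2) F) (d : Fin 2 → F),
      ((P * M * P⁻¹ : GL (Fin 2) F) : Matrix (Fin 2) (Fin 2) F) = Matrix.diagonal d}
      = Sset (F := F) := rfl
  rw [hSeq]
  have hunion : ScSet (F := F) ∪ (Sset \ ScSet) = Sset :=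
    Set.union_diff_cancel (fun M hM => scalar_mem_S hM)
  have hdisj : Disjoint (ScSet (F := F)) (Sset \ ScSet) := Set.disjoint_sdiff_right
  have hcard : Nat.card (Sset (F := F)) = (ScSet (F := F)).ncard + (Sset (F := F) \ ScSet).ncard := by
    have h := Set.ncard_union_eq hdisj (Set.toFinite _) (Set.toFinite _)
    rw [hunion] at h
    rw [Nat.card_coe_set_eq, h]
  have hSc : (ScSet (F := F)).ncard = q - 1 := by
    rw [← Nat.card_coe_set_eq, ← Nat.card_eq_of_bijective _ scal_bij,
      Nat.card_eq_fintype_card, Fintype.card_units, hq]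
  have hNSfin : (Sset (F := F) \ ScSet).Finite := Set.toFinite _
  have key2 : Fintype.card (Etype F) = 2 * (Sset (F := F) \ ScSet).ncard := by
    have hfib : ∀ M ∈ hNSfin.toFinset,
        (Finset.univ.filter fun e : Etype F => fmap e = M).card = 2 := by
      intro M hM
      rw [Set.Finite.mem_toFinset] at hM
      obtain ⟨e₀, he₀⟩ := surj_fmap hM.1 hM.2
      have hfil : Finset.univ.filter (fun e : Etype F => fmap e = M) = {e₀, eswap e₀} := by
        ext e
        simp only [Finset.mem_filter, Finset.mem_univ, true_and, Finset.mem_insert,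
          Finset.mem_singleton]
        constructor
        · intro hfe
          exact fmap_fiber (hfe.trans he₀.symm)
        · rintro (rfl | rfl)
          · exact he₀
          · rw [fmap_eswap]
            exact he₀
      rw [hfil, Finset.card_insert_of_notMem (by simpa using (eswap_ne e₀).symm),
        Finset.card_singleton]
    rw [← Finset.card_univ]
    rw [Finset.card_eq_sum_card_fiberwise (f := fmap) (t := hNSfin.toFinset)
      (fun e _ => by
        rw [Finset.mem_coe, Set.Finite.mem_toFinset]
        exact ⟨(fmap_mem e).1, (fmap_mem e).2⟩)]
    rw [Finset.sum_congr rfl hfib, Finset.sum_const, smul_eq_mul,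
      Set.ncard_eq_toFinset_card _ hNSfin]
    exact Nat.mul_comm _ _
  have h2A : 2 * (Sset (F := F) \ ScSet).ncard =
      ((q - 1) * (q - 1) - (q - 1)) * ((q + 1) * (q + 1) - (q + 1)) := by
    rw [← key2, card_Etype, hq]
  have hA : (Sset (F := F) \ ScSet).ncard = (q - 2) * (q - 1) * q * (q + 1) / 2 := by
    symm
    apply Nat.div_eq_of_eq_mul_left (by norm_num)
    have hle1 : (q - 1) ≤ (q - 1) * (q - 1) := Nat.le_mul_of_pos_left _ (by omega)
    have hle2 : (q + 1) ≤ (q + 1) * (q + 1) := Nat.le_mul_of_pos_left _ (by omega)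
    zify [hle1, hle2, show 1 ≤ q by omega, hq2] at h2A ⊢
    linear_combination -h2A
  rw [hcard, hSc, hA, Nat.add_comm]
end

section
/- Let G be a finite group, H_k a subgroup of index 2 in G, and H_K a subgroup such that H_K ⊆ H_k. Suppose c ∈ G \ H_k has order 2. Then the set of g ∈ G with g ∉ H_k and g² ∈ H_K is nonempty and has at least |H_K| elements, hence the proportion of such elements in G is at least 1/[G : H_K]. -/
theorem stmt11 (G : Type*) [Group G] [Fintype G] (Hk HK : Subgroup G)
    (hk : Hk.index = 2) (hKk : HK ≤ Hk) (c : G) (hc2 : c ^ 2 = 1)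
    (hcN : c ∉ Hk) :
    ({g : G | g ∉ Hk ∧ g ^ 2 ∈ HK}).Nonempty ∧
    Nat.card HK ≤ Nat.card {g : G | g ∉ Hk ∧ g ^ 2 ∈ HK} ∧
    (1 : ℚ) / HK.index ≤
      (Nat.card {g : G | g ∉ Hk ∧ g ^ 2 ∈ HK} : ℚ) / Nat.card G := by
  classical
  have hcc : c * c = 1 := by rw [← pow_two]; exact hc2
  have hcinv : c⁻¹ = c := inv_eq_of_mul_eq_one_right hcc
  set S : Set G := {g : G | g ∉ Hk ∧ g ^ 2 ∈ HK} with hSdef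
  -- the subgroup St = {a ∈ HK | c*a*c ∈ HK}
  set St : Subgroup G := HK ⊓ Subgroup.comap (MulAut.conj c : G →* G) HK with hStdef
  have hSt : ∀ a : G, a ∈ St ↔ a ∈ HK ∧ c * a * c ∈ HK := by
    intro a
    rw [hStdef, Subgroup.mem_inf, Subgroup.mem_comap]
    simp [MulAut.conj_apply, hcinv]
  -- representative function
  set r : G → G := fun g => (QuotientGroup.mk g : G ⧸ St).out with hrdef
  have hrmk : ∀ g : G, (QuotientGroup.mk (r g) : G ⧸ St) = QuotientGroup.mk g := by
    intro g; exact QuotientGroup.out_eq' _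
  have hrmem : ∀ g : G, (r g)⁻¹ * g ∈ St := by
    intro g; exact (QuotientGroup.eq).mp (hrmk g)
  have hreq : ∀ g₁ g₂ : G, g₁⁻¹ * g₂ ∈ St → r g₁ = r g₂ := by
    intro g₁ g₂ h
    have : (QuotientGroup.mk g₁ : G ⧸ St) = QuotientGroup.mk g₂ := (QuotientGroup.eq).mpr h
    rw [hrdef]; simp only [this]
  -- r g ∈ HK whenever g ∈ HK
  have hrHK : ∀ g : G, g ∈ HK → r g ∈ HK := by
    intro g hg
    have h1 : (r g)⁻¹ * g ∈ HK := ((hSt _).mp (hrmem g)).1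
    have := HK.mul_mem h1 (HK.inv_mem hg)
    simpa [mul_assoc] using HK.inv_mem this
  -- the injection
  have hF : ∀ k : G, k ∈ HK → (k * c * (r k)⁻¹) ∈ S := by
    intro k hk'
    have hu : r k ∈ HK := hrHK k hk'
    have hs : (r k)⁻¹ * k ∈ St := hrmem k
    constructor
    · -- not in Hk
      intro hmem
      apply hcN
      have h1 : (k : G)⁻¹ * (k * c * (r k)⁻¹) * (r k) ∈ Hk :=
        Hk.mul_mem (Hk.mul_mem (Hk.inv_mem (hKk hk')) hmem) (hKk hu)
      simpa [mul_assoc] using h1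
    · -- square in HK
      have hw : c * ((r k)⁻¹ * k) * c ∈ HK := ((hSt _).mp hs).2
      have heq : (k * c * (r k)⁻¹) ^ 2 = k * (c * ((r k)⁻¹ * k) * c) * (r k)⁻¹ := by
        rw [pow_two]; group
      rw [heq]
      exact HK.mul_mem (HK.mul_mem hk' hw) (HK.inv_mem hu)
  -- nonempty
  have hne : S.Nonempty := ⟨c, hcN, by rw [hc2]; exact HK.one_mem⟩
  -- injectivity
  have hinj : Function.Injective
      (fun k : ↥HK => (⟨(k : G) * c * (r (k : G))⁻¹, hF k k.2⟩ : ↥S)) := by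
    intro k k' h
    have heq : (k : G) * c * (r (k : G))⁻¹ = (k' : G) * c * (r (k' : G))⁻¹ := by
      simpa using congrArg Subtype.val h
    have hu : r (k : G) ∈ HK := hrHK _ k.2
    have hu' : r (k' : G) ∈ HK := hrHK _ k'.2
    have hm1 : (r (k : G))⁻¹ * (r (k' : G)) ∈ HK := HK.mul_mem (HK.inv_mem hu) hu'
    have hkey : c * ((r (k : G))⁻¹ * (r (k' : G))) * c = (k : G)⁻¹ * (k' : G) := by
      have h2 : c * (r (k : G))⁻¹ = (k : G)⁻¹ * ((k' : G) * c * (r (k' : G))⁻¹) := by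
        rw [← heq]; group
      calc c * ((r (k : G))⁻¹ * (r (k' : G))) * c
          = (c * (r (k : G))⁻¹) * ((r (k' : G)) * c) := by group
        _ = ((k : G)⁻¹ * ((k' : G) * c * (r (k' : G))⁻¹)) * ((r (k' : G)) * c) := by rw [h2]
        _ = (k : G)⁻¹ * (k' : G) * (c * c) := by group
        _ = (k : G)⁻¹ * (k' : G) := by rw [hcc, mul_one]
    have hm2 : c * ((r (k : G))⁻¹ * (r (k' : G))) * c ∈ HK := by
      rw [hkey]; exact HK.mul_mem (HK.inv_mem k.2) k'.2
    have hmSt : (r (k : G))⁻¹ * (r (k' : G)) ∈ St := (hSt _).mpr ⟨hm1, hm2⟩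
    have hrkk : r (k : G) = r (k' : G) := by
      have e1 : r (r (k : G)) = r (r (k' : G)) := hreq _ _ hmSt
      have e2 : r (r (k : G)) = r (k : G) := hreq _ _ (hrmem (k : G))
      have e3 : r (r (k' : G)) = r (k' : G) := hreq _ _ (hrmem (k' : G))
      rw [← e2, ← e3, e1]
    have : (k : G) = (k' : G) := by
      have := heq
      rw [hrkk] at this
      exact mul_right_cancel (mul_right_cancel this)
    exact Subtype.ext this
  have hcard : Nat.card HK ≤ Nat.card S :=
    Nat.card_le_card_of_injective _ hinj
  refine ⟨hne, hcard, ?_⟩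
  -- proportion bound
  have hmul : Nat.card HK * HK.index = Nat.card G := Subgroup.card_mul_index HK
  have hGpos : 0 < Nat.card G := Nat.card_pos
  have hixpos : 0 < HK.index := by
    rcases Nat.eq_zero_or_pos HK.index with h | h
    · rw [h, mul_zero] at hmul; omega
    · exact h
  rw [div_le_div_iff₀ (by exact_mod_cast hixpos) (by exact_mod_cast hGpos)]
  have hmulQ : (Nat.card HK : ℚ) * HK.index = Nat.card G := by exact_mod_cast hmul
  have hcardQ : (Nat.card HK : ℚ) ≤ Nat.card S := by exact_mod_cast hcard
  calc (1 : ℚ) * Nat.card G = (Nat.card HK : ℚ) * HK.index := by rw [one_mul, hmulQ]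
    _ ≤ (Nat.card S : ℚ) * HK.index := by
        apply mul_le_mul_of_nonneg_right hcardQ (by positivity)
end
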